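/- arXiv:1509.02241 — 5 statements merged into one kernel-verified Lean document; each statement's English description precedes it below -/
import Mathlib

section
/- Let Ξ ⊂ E(n) admit a honeycomb (T, p) with all cells of volume v, i.e. ℝⁿ is triangulated by simplices with vertices in {ξ(0) : ξ ∈ Ξ}, uniformly bounded diameters and inradii bounded below, each full-dimensional simplex labeled by p with p(s) containing a vertex of s, and each cell P_ξ = ∪_{p(s)=ξ} s̄ has volume v. Then the mean volume d(Ξ) = lim_{t→∞} vol B(0,t) / #{ξ ∈ Ξ : ξ(0) ∈ B(0,t)} exists and equals v. -/
open MeasureTheory Filter Metric Set Topology Module Function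
open scoped ENNReal

/-!
The cells whose base points lie in `B(a, t)` are contained in `B(a, t + M)`, and they cover
`B(a, t - M)`. As the cells are essentially disjoint of volume `v`, the number `N(t)` of such base
points satisfies `vol B(a, t - M) ≤ v N(t) ≤ vol B(a, t + M)` (the upper bound also shows that
`N(t)` is finite). Haar measure of balls scales like `t ^ n`, so both bounds are asymptotic to
`vol B(a, t)`.
-/

section CellCounting

variable {X ι : Type*} [PseudoMetricSpace X] [MeasurableSpace X] {μ : Measure X}
  {x : ι → X} {P : ι → Set X} {M : ℝ} {m : ℝ≥0∞}

theorem card_mul_le_measure_closedBall (hmeas : ∀ i, NullMeasurableSet (P i) μ)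
    (hvol : ∀ i, μ (P i) = m) (hdisj : Pairwise (AEDisjoint μ on P))
    (hbdd : ∀ i, P i ⊆ closedBall (x i) M) {a : X} {t : ℝ} {s : Finset ι}
    (hs : ∀ i ∈ s, x i ∈ ball a t) : s.card * m ≤ μ (closedBall a (t + M)) := by
  calc (s.card : ℝ≥0∞) * m = μ (⋃ i ∈ s, P i) := by
        rw [measure_biUnion_finset₀ (fun i _ j _ hij => hdisj hij) (fun i _ => hmeas i)]
        simp [hvol]
    _ ≤ μ (closedBall a (t + M)) := by
        refine measure_mono (iUnion₂_subset fun i hi => (hbdd i).trans ?_)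
        exact closedBall_subset_closedBall' (by linarith [mem_ball.1 (hs i hi)])

theorem finite_setOf_mem_ball (hm : m ≠ 0) (hmeas : ∀ i, NullMeasurableSet (P i) μ)
    (hvol : ∀ i, μ (P i) = m) (hdisj : Pairwise (AEDisjoint μ on P))
    (hbdd : ∀ i, P i ⊆ closedBall (x i) M) {a : X} {t : ℝ}
    (hfin : μ (closedBall a (t + M)) ≠ ∞) : {i | x i ∈ ball a t}.Finite := by
  by_contra hinf
  obtain ⟨k, hk⟩ := ENNReal.exists_nat_mul_gt hm hfin
  obtain ⟨s, hs, rfl⟩ := Set.Infinite.exists_subset_card_eq hinf k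
  exact (card_mul_le_measure_closedBall hmeas hvol hdisj hbdd fun i hi => hs hi).not_gt hk

theorem ncard_mul_le_measure_closedBall (hmeas : ∀ i, NullMeasurableSet (P i) μ)
    (hvol : ∀ i, μ (P i) = m) (hdisj : Pairwise (AEDisjoint μ on P))
    (hbdd : ∀ i, P i ⊆ closedBall (x i) M) (a : X) (t : ℝ) :
    {i | x i ∈ ball a t}.ncard * m ≤ μ (closedBall a (t + M)) := by
  by_cases hS : {i | x i ∈ ball a t}.Finite
  · rw [ncard_eq_toFinset_card _ hS]
    exact card_mul_le_measure_closedBall hmeas hvol hdisj hbdd fun i hi => (hS.mem_toFinset).1 hi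
  · rw [Set.Infinite.ncard hS, Nat.cast_zero, zero_mul]
    exact zero_le

theorem measure_ball_le_ncard_mul (hvol : ∀ i, μ (P i) = m) (hcover : ⋃ i, P i = univ)
    (hbdd : ∀ i, P i ⊆ closedBall (x i) M) {a : X} {t : ℝ}
    (hS : {i | x i ∈ ball a t}.Finite) :
    μ (ball a (t - M)) ≤ {i | x i ∈ ball a t}.ncard * m := by
  have hsub : ball a (t - M) ⊆ ⋃ i ∈ hS.toFinset, P i := by
    intro y hy
    obtain ⟨i, hi⟩ := mem_iUnion.1 (hcover.symm ▸ mem_univ y)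
    refine mem_biUnion (x := i) ((hS.mem_toFinset).2 (mem_ball.2 ?_)) hi
    linarith [dist_triangle (x i) y a, mem_closedBall'.1 (hbdd i hi), mem_ball.1 hy]
  calc μ (ball a (t - M)) ≤ μ (⋃ i ∈ hS.toFinset, P i) := measure_mono hsub
    _ ≤ ∑ i ∈ hS.toFinset, μ (P i) := measure_biUnion_finset_le _ _
    _ = {i | x i ∈ ball a t}.ncard * m := by rw [ncard_eq_toFinset_card _ hS]; simp [hvol]

end CellCounting

theorem tendsto_add_pow_div_pow_atTop (d : ℕ) (c : ℝ) :
    Tendsto (fun t : ℝ => (t + c) ^ d / t ^ d) atTop (𝓝 1) := by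
  have h : Tendsto (fun t : ℝ => (1 + c * t⁻¹) ^ d) atTop (𝓝 1) := by
    simpa using ((tendsto_inv_atTop_zero.const_mul c).const_add 1).pow d
  refine h.congr' ?_
  filter_upwards [eventually_gt_atTop 0] with t ht
  rw [← div_pow]
  field_simp

section AddHaar

variable {E : Type*} [NormedAddCommGroup E] [NormedSpace ℝ E] [FiniteDimensional ℝ E]
  [MeasurableSpace E] [BorelSpace E] (μ : Measure E) [μ.IsAddHaarMeasure]

theorem MeasureTheory.Measure.addHaar_real_ball_of_pos (a : E) {r : ℝ} (hr : 0 < r) :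
    μ.real (ball a r) = r ^ finrank ℝ E * μ.real (ball 0 1) := by
  simp [measureReal_def, μ.addHaar_ball_of_pos a hr, hr.le]

theorem tendsto_measureReal_ball_div_ncard {ι : Type*} {x : ι → E} {P : ι → Set E} {v M : ℝ}
    (hv : 0 < v) (hmeas : ∀ i, NullMeasurableSet (P i) μ)
    (hvol : ∀ i, μ (P i) = ENNReal.ofReal v) (hdisj : Pairwise (AEDisjoint μ on P))
    (hcover : ⋃ i, P i = univ) (hbdd : ∀ i, P i ⊆ closedBall (x i) M) (a : E) :
    Tendsto (fun t => μ.real (ball a t) / {i | x i ∈ ball a t}.ncard) atTop (𝓝 v) := by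
  set d := finrank ℝ E
  set c := μ.real (ball (0 : E) 1)
  have hc : 0 < c := ENNReal.toReal_pos (measure_ball_pos μ 0 one_pos).ne' measure_ball_lt_top.ne
  set N : ℝ → ℝ := fun t => {i | x i ∈ ball a t}.ncard
  have hfin (t : ℝ) : {i | x i ∈ ball a t}.Finite :=
    finite_setOf_mem_ball (by simpa using hv) hmeas hvol hdisj hbdd measure_closedBall_lt_top.ne
  have hupper (t : ℝ) (ht : 0 ≤ t + M) : N t * v ≤ (t + M) ^ d * c := by
    rw [← μ.addHaar_real_closedBall a ht]
    simpa [N, measureReal_def, hv.le] using ENNReal.toReal_mono measure_closedBall_lt_top.ne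
      (ncard_mul_le_measure_closedBall hmeas hvol hdisj hbdd a t)
  have hlower (t : ℝ) (ht : 0 < t + -M) : (t + -M) ^ d * c ≤ N t * v := by
    rw [← μ.addHaar_real_ball_of_pos a ht, ← sub_eq_add_neg]
    have hne : ({i | x i ∈ ball a t}.ncard : ℝ≥0∞) * ENNReal.ofReal v ≠ ∞ := by finiteness
    simpa [N, measureReal_def, hv.le] using
      ENNReal.toReal_mono hne (measure_ball_le_ncard_mul hvol hcover hbdd (hfin t))
  have hratio : Tendsto (fun t => N t * v / (t ^ d * c)) atTop (𝓝 1) := by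
    refine tendsto_of_tendsto_of_tendsto_of_le_of_le' (tendsto_add_pow_div_pow_atTop d (-M))
      (tendsto_add_pow_div_pow_atTop d M) ?_ ?_
    · filter_upwards [eventually_gt_atTop 0, eventually_gt_atTop M] with t ht htM
      rw [← mul_div_mul_right _ (t ^ d) hc.ne']
      exact div_le_div_of_nonneg_right (hlower t (by linarith)) (by positivity)
    · filter_upwards [eventually_gt_atTop 0, eventually_gt_atTop (-M)] with t ht htM
      rw [← mul_div_mul_right _ (t ^ d) hc.ne']
      exact div_le_div_of_nonneg_right (hupper t (by linarith)) (by positivity)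
  have hquot := (tendsto_const_nhds (x := v)).div hratio one_ne_zero
  rw [div_one] at hquot
  refine hquot.congr' ?_
  filter_upwards [eventually_gt_atTop 0] with t ht
  rw [Pi.div_apply, μ.addHaar_real_ball_of_pos a ht, div_div_eq_mul_div, mul_comm (N t) v,
    mul_div_mul_left _ _ hv.ne']

end AddHaar

theorem mean_volume_of_honeycomb_general (n : ℕ) (v M : ℝ) (hv : 0 < v)
    (Ξ : ℕ → EuclideanSpace ℝ (Fin n))
    (P : ℕ → Set (EuclideanSpace ℝ (Fin n)))
    (hmeas : ∀ i, MeasurableSet (P i))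
    (hvol : ∀ i, volume (P i) = ENNReal.ofReal v)
    (hdisj : Pairwise fun i j => volume (P i ∩ P j) = 0)
    (hcover : (⋃ i, P i) = Set.univ)
    (hbdd : ∀ i, P i ⊆ Metric.closedBall (Ξ i) M) :
    Tendsto
      (fun t : ℝ =>
        (volume (Metric.ball (0 : EuclideanSpace ℝ (Fin n)) t)).toReal /
          (Nat.card {i : ℕ | Ξ i ∈ Metric.ball (0 : EuclideanSpace ℝ (Fin n)) t} : ℝ))
      atTop (nhds v) := by
  simpa only [Nat.card_coe_set_eq, measureReal_def] using
    tendsto_measureReal_ball_div_ncard volume hv (fun i => (hmeas i).nullMeasurableSet) hvol hdisj hcover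
      hbdd 0

/-- If a countable `(r,R)`-set `Ξ` of isometries of `ℝⁿ` (identified here with the points
`ξ(0)`, which are `r`-separated) admits a honeycomb whose cells `P i` all have volume `v`
(the cells contain their base points, are pairwise essentially disjoint, cover `ℝⁿ`, and have
uniformly bounded diameter `M`), then the mean volume
`d(Ξ) = lim_{t→∞} vol B(0,t) / #{ξ ∈ Ξ : ξ(0) ∈ B(0,t)}` exists and equals `v`. -/
theorem mean_volume_of_honeycomb (n : ℕ) (v r M : ℝ) (hv : 0 < v) (hr : 0 < r) (hM : 0 < M)
    (Ξ : ℕ → EuclideanSpace ℝ (Fin n))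
    (hsep : ∀ i j, i ≠ j → r ≤ dist (Ξ i) (Ξ j))
    (P : ℕ → Set (EuclideanSpace ℝ (Fin n)))
    (hmeas : ∀ i, MeasurableSet (P i))
    (hmem : ∀ i, Ξ i ∈ P i)
    (hvol : ∀ i, volume (P i) = ENNReal.ofReal v)
    (hdisj : Pairwise fun i j => volume (P i ∩ P j) = 0)
    (hcover : (⋃ i, P i) = Set.univ)
    (hbdd : ∀ i, P i ⊆ Metric.closedBall (Ξ i) M) :
    Tendsto
      (fun t : ℝ =>
        (volume (Metric.ball (0 : EuclideanSpace ℝ (Fin n)) t)).toReal /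
          (Nat.card {i : ℕ | Ξ i ∈ Metric.ball (0 : EuclideanSpace ℝ (Fin n)) t} : ℝ))
      atTop (nhds v) :=
  mean_volume_of_honeycomb_general n v M hv Ξ P hmeas hvol hdisj hcover hbdd
end

section
/- Let f and g_r (r in a finite index set I) be continuously differentiable functions on ℝⁿ with f(0) = g_r(0) = 0. Suppose the linear program: minimize ∇f(0)·x subject to ∇g_r(0)·x ≥ 0 for all r ∈ I, has exactly the line E = span{e₁} as its solution set; suppose g_r(t e₁) = 0 for all small t and all r; and suppose t ↦ f(t e₁) has an isolated local minimum at t = 0. Then there exists ε > 0 such that x = 0 is the unique minimizer of f(x) subject to g_r(x) ≥ 0 for all r and ‖x‖ ≤ ε. -/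
/-!
Write `x = v + h` with `v` the orthogonal projection of `x` onto the slice direction `V` and
`h ∈ Vᗮ`. The LP hypothesis says that `ℓ = Df(0)` is strictly positive on the nonzero vectors of
`Vᗮ` satisfying the linearized constraints `a r = Dg_r(0) ≥ 0`; by compactness of the unit sphere
of `Vᗮ` this becomes the penalty estimate `β ‖h‖ ≤ ℓ h + K ∑ r, (a r h)⁻` on all of `Vᗮ`.
Strict differentiability at `0` gives `g_r x ≈ g_r v + a r h` and `f x ≈ f v + ℓ h` up to `ε ‖h‖`.
Since `g_r v = 0`, feasibility of `x` makes the penalty term `O(ε ‖h‖)`, so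
`f x ≥ f v + (β - O(ε)) ‖h‖`, while `f v ≥ f 0` by the minimality of `0` on the slice.
-/

open Filter Topology

theorem lt_of_setOf_isMinOn_eq {α β : Type*} [LinearOrder β] {C V : Set α} {φ : α → β}
    (hV : {x | x ∈ C ∧ IsMinOn φ C x} = V) {x₀ u : α} (hx₀ : x₀ ∈ V) (hu : u ∈ C)
    (huV : u ∉ V) : φ x₀ < φ u := by
  rw [← hV] at hx₀ huV
  refine lt_of_not_ge fun hle => huV ⟨hu, fun y hy => ?_⟩
  exact hle.trans (hx₀.2 hy)

theorem HasStrictFDerivAt.eventually_norm_sub_sub_le {E F : Type*} [NormedAddCommGroup E]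
    [NormedSpace ℝ E] [NormedAddCommGroup F] [NormedSpace ℝ F] {f : E → F} {f' : E →L[ℝ] F}
    {x₀ : E} (hf : HasStrictFDerivAt f f' x₀) {P : E → E} (hP : Tendsto P (𝓝 x₀) (𝓝 x₀))
    {ε : ℝ} (hε : 0 < ε) :
    ∀ᶠ x in 𝓝 x₀, ‖f x - f (P x) - f' (x - P x)‖ ≤ ε * ‖x - P x‖ :=
  (tendsto_id.prodMk_nhds hP).eventually ((hasStrictFDerivAt_iff_isLittleO.1 hf).def hε)

section ConstraintViolation

variable {E : Type*} [NormedAddCommGroup E] [NormedSpace ℝ E] {ι : Type*} [Fintype ι]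

def constraintViolation (a : ι → E →L[ℝ] ℝ) (h : E) : ℝ := ∑ r, (a r h)⁻

variable {a : ι → E →L[ℝ] ℝ}

theorem constraintViolation_nonneg (h : E) : 0 ≤ constraintViolation a h :=
  Finset.sum_nonneg fun _ _ => negPart_nonneg _

theorem constraintViolation_eq_zero_iff {h : E} :
    constraintViolation a h = 0 ↔ ∀ r, 0 ≤ a r h := by
  simp [constraintViolation, Finset.sum_eq_zero_iff_of_nonneg]

theorem constraintViolation_smul {c : ℝ} (hc : 0 ≤ c) (h : E) :
    constraintViolation a (c • h) = c * constraintViolation a h := by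
  simp only [constraintViolation, Finset.mul_sum, map_smul, smul_eq_mul, negPart_def,
    mul_max_of_nonneg _ _ hc, mul_neg, mul_zero]

theorem continuous_constraintViolation : Continuous (constraintViolation a) :=
  continuous_finsetSum _ fun r _ => continuous_negPart.comp (a r).continuous

theorem constraintViolation_le {h : E} {δ : ℝ} (hδ : 0 ≤ δ) (ha : ∀ r, -δ ≤ a r h) :
    constraintViolation a h ≤ Fintype.card ι * δ := by
  simpa [constraintViolation] using Finset.sum_le_card_nsmul Finset.univ _ δ fun r _ =>
    negPart_def (a r h) ▸ max_le (neg_le.1 (ha r)) hδ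

variable {ℓ : E →L[ℝ] ℝ}

theorem IsCompact.exists_nat_forall_pos_add_mul_constraintViolation {S : Set E}
    (hS : IsCompact S) (hpos : ∀ u ∈ S, (∀ r, 0 ≤ a r u) → 0 < ℓ u) :
    ∃ K : ℕ, ∀ u ∈ S, 0 < ℓ u + K * constraintViolation a u := by
  refine hS.elim_directed_cover (fun K : ℕ => {u | 0 < ℓ u + K * constraintViolation a u})
    (fun K => isOpen_lt continuous_const
      (ℓ.continuous.add (continuous_const.mul continuous_constraintViolation)))
    (fun u hu => ?_) (Monotone.directed_le fun K L hKL u (hu : 0 < ℓ u + K * _) => ?_)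
  · by_cases hfeas : ∀ r, 0 ≤ a r u
    · exact Set.mem_iUnion.2 ⟨0, by simpa using hpos u hu hfeas⟩
    · have hviol : 0 < constraintViolation a u :=
        (constraintViolation_nonneg u).lt_of_ne' (constraintViolation_eq_zero_iff.not.2 hfeas)
      obtain ⟨K, hK⟩ := exists_nat_gt (-ℓ u / constraintViolation a u)
      refine Set.mem_iUnion.2 ⟨K, ?_⟩
      have := (div_lt_iff₀ hviol).1 hK
      show 0 < ℓ u + K * constraintViolation a u
      linarith
  · exact hu.trans_le (add_le_add_right (mul_le_mul_of_nonneg_right (Nat.cast_le.2 hKL)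
      (constraintViolation_nonneg u)) _)

theorem exists_pos_mul_norm_le_add_mul_constraintViolation
    [FiniteDimensional ℝ E] {W : Submodule ℝ E}
    (hpos : ∀ u ∈ W, u ≠ 0 → (∀ r, 0 ≤ a r u) → 0 < ℓ u) :
    ∃ (K : ℕ) (β : ℝ), 0 < β ∧ ∀ h ∈ W, β * ‖h‖ ≤ ℓ h + K * constraintViolation a h := by
  have hcpt : IsCompact (Metric.sphere (0 : E) 1 ∩ W) :=
    (isCompact_sphere 0 1).inter_right W.closed_of_finiteDimensional
  obtain ⟨K, hK⟩ := hcpt.exists_nat_forall_pos_add_mul_constraintViolation fun u ⟨hu, huW⟩ =>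
    hpos u huW (ne_zero_of_mem_unit_sphere ⟨u, hu⟩)
  obtain ⟨β, hβ, hβK⟩ := hcpt.exists_forall_le' (f := fun u => ℓ u + K * constraintViolation a u)
    (ℓ.continuous.add (continuous_const.mul continuous_constraintViolation)).continuousOn hK
  refine ⟨K, β, hβ, fun h hh => ?_⟩
  rcases eq_or_ne h 0 with rfl | h0
  · simp [constraintViolation]
  have hnorm : 0 < ‖h‖ := norm_pos_iff.2 h0
  have hu := hβK (‖h‖⁻¹ • h) ⟨by simp [norm_smul, hnorm.ne'], W.smul_mem _ hh⟩
  rw [map_smul, constraintViolation_smul (inv_nonneg.2 hnorm.le), smul_eq_mul] at hu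
  calc β * ‖h‖ ≤ (‖h‖⁻¹ * ℓ h + K * (‖h‖⁻¹ * constraintViolation a h)) * ‖h‖ := by gcongr
    _ = ℓ h + K * constraintViolation a h := by field_simp

end ConstraintViolation

theorem eventually_lt_of_sliced {E : Type*} [NormedAddCommGroup E] [InnerProductSpace ℝ E]
    [FiniteDimensional ℝ E] {ι : Type*} [Fintype ι] (V : Submodule ℝ E) {f : E → ℝ}
    {g : ι → E → ℝ} {ℓ : E →L[ℝ] ℝ} {a : ι → E →L[ℝ] ℝ} (hf : HasStrictFDerivAt f ℓ 0)
    (hg : ∀ r, HasStrictFDerivAt (g r) (a r) 0)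
    (hpos : ∀ u ∈ Vᗮ, u ≠ 0 → (∀ r, 0 ≤ a r u) → 0 < ℓ u)
    (hzero : ∀ᶠ v in 𝓝 0, v ∈ V → ∀ r, g r v = 0)
    (hmin : ∀ᶠ v in 𝓝 0, v ∈ V → v ≠ 0 → f 0 < f v) :
    ∀ᶠ x in 𝓝 0, (∀ r, 0 ≤ g r x) → x ≠ 0 → f 0 < f x := by
  obtain ⟨K, β, hβ, hpen⟩ := exists_pos_mul_norm_le_add_mul_constraintViolation hpos
  obtain ⟨ε, hε, hεβ⟩ := exists_pos_mul_lt hβ (K * Fintype.card ι + 1)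
  set P := V.starProjection
  have hP : Tendsto P (𝓝 0) (𝓝 0) := by simpa using P.continuous.tendsto 0
  filter_upwards [hf.eventually_norm_sub_sub_le hP hε,
    eventually_all.2 fun r => (hg r).eventually_norm_sub_sub_le hP hε,
    hP.eventually hzero, hP.eventually hmin] with x hfx hgx hzx hmx hfeas hx0
  have hPV : P x ∈ V := V.starProjection_apply_mem x
  have hfP : f 0 ≤ f (P x) := by
    rcases eq_or_ne (P x) 0 with h0 | h0
    · rw [h0]
    · exact (hmx hPV h0).le
  set h := x - P x
  rcases eq_or_ne h 0 with hh | hh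
  · rw [sub_eq_zero] at hh
    exact hh ▸ hmx hPV (hh ▸ hx0)
  have hviol : constraintViolation a h ≤ Fintype.card ι * (ε * ‖h‖) := by
    refine constraintViolation_le (by positivity) fun r => ?_
    have hgr := hgx r
    rw [Real.norm_eq_abs, hzx hPV r, sub_zero, abs_le] at hgr
    linarith [hfeas r]
  have hℓ : β * ‖h‖ ≤ ℓ h + K * (Fintype.card ι * (ε * ‖h‖)) :=
    (hpen h (V.sub_starProjection_mem_orthogonal x)).trans (by gcongr)
  have hgap : 0 < (β - (K * Fintype.card ι + 1) * ε) * ‖h‖ :=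
    mul_pos (by linarith) (norm_pos_iff.2 hh)
  rw [Real.norm_eq_abs, abs_le] at hfx
  linarith [hfx.1]

theorem eventually_mem_span_singleton_imp {E : Type*} [NormedAddCommGroup E] [NormedSpace ℝ E]
    {e : E} (he : ‖e‖ = 1) {p : E → Prop} (hp : ∃ δ > 0, ∀ t : ℝ, |t| < δ → p (t • e)) :
    ∀ᶠ v in 𝓝 0, v ∈ (ℝ ∙ e) → p v := by
  obtain ⟨δ, hδ, hpδ⟩ := hp
  filter_upwards [Metric.ball_mem_nhds 0 hδ] with v hv hvE
  obtain ⟨t, rfl⟩ := Submodule.mem_span_singleton.1 hvE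
  exact hpδ t (by simpa [norm_smul, he] using hv)

theorem sliced_nlp_local_min_general (n : ℕ) (hn : 0 < n) (ι : Type) [Fintype ι]
    (f : EuclideanSpace ℝ (Fin n) → ℝ) (g : ι → EuclideanSpace ℝ (Fin n) → ℝ)
    (hf : ContDiff ℝ 1 f) (hg : ∀ r, ContDiff ℝ 1 (g r))
    (e₁ : EuclideanSpace ℝ (Fin n)) (he₁ : e₁ = EuclideanSpace.single ⟨0, hn⟩ 1)
    (hLP : {x : EuclideanSpace ℝ (Fin n) |
        (∀ r, (0 : ℝ) ≤ inner ℝ (gradient (g r) 0) x) ∧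
        ∀ y : EuclideanSpace ℝ (Fin n), (∀ r, (0 : ℝ) ≤ inner ℝ (gradient (g r) 0) y) →
          (inner ℝ (gradient f 0) x : ℝ) ≤ inner ℝ (gradient f 0) y}
      = {x : EuclideanSpace ℝ (Fin n) | ∃ t : ℝ, x = t • e₁})
    (hzero : ∃ δ > (0 : ℝ), ∀ t : ℝ, |t| < δ → ∀ r, g r (t • e₁) = 0)
    (hmin : ∃ δ > (0 : ℝ), ∀ t : ℝ, |t| < δ → t ≠ 0 → f 0 < f (t • e₁)) :
    ∃ ε > (0 : ℝ), ∀ x : EuclideanSpace ℝ (Fin n),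
      (∀ r, 0 ≤ g r x) → ‖x‖ ≤ ε → x ≠ 0 → f 0 < f x := by
  have he₁_norm : ‖e₁‖ = 1 := by simp [he₁]
  have hpos : ∀ u ∈ (ℝ ∙ e₁)ᗮ, u ≠ 0 → (∀ r, 0 ≤ fderiv ℝ (g r) 0 u) → 0 < fderiv ℝ f 0 u := by
    intro u hu hu0 hfeas
    have huE : u ∉ {x | ∃ t : ℝ, x = t • e₁} := by
      rintro ⟨t, rfl⟩
      exact hu0 ((ℝ ∙ e₁).inf_orthogonal_eq_bot.le
        ⟨Submodule.smul_mem _ t (Submodule.mem_span_singleton_self e₁), hu⟩)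
    simpa [InnerProductSpace.toDual_symm_apply] using
      lt_of_setOf_isMinOn_eq (C := {y | ∀ r, 0 ≤ inner ℝ (gradient (g r) 0) y})
        (φ := fun y => inner ℝ (gradient f 0) y) hLP ⟨0, (zero_smul ℝ e₁).symm⟩
        (by simpa [gradient, InnerProductSpace.toDual_symm_apply] using hfeas) huE
  have hsliced := eventually_lt_of_sliced (ℝ ∙ e₁) (hf.hasStrictFDerivAt one_ne_zero)
    (fun r => (hg r).hasStrictFDerivAt one_ne_zero) hpos
    (eventually_mem_span_singleton_imp he₁_norm hzero)
    (eventually_mem_span_singleton_imp he₁_norm (p := fun v => v ≠ 0 → f 0 < f v) <|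
      hmin.imp fun _ ⟨hδ, hfδ⟩ => ⟨hδ, fun t ht h0 => hfδ t ht (left_ne_zero_of_smul h0)⟩)
  obtain ⟨ε, hε, hball⟩ := Metric.nhds_basis_closedBall.eventually_iff.1 hsliced
  exact ⟨ε, hε, fun x hfeas hx => hball (mem_closedBall_zero_iff.2 hx) hfeas⟩

/-- Sliced nonlinear programming criterion: if `f`, `g_r` are `C¹` with `f(0) = g_r(0) = 0`,
the linearized program `min ⟪∇f(0), x⟫ s.t. ⟪∇g_r(0), x⟫ ≥ 0` has exactly the line
`E = span{e₁}` as its solution set, `g_r` vanishes identically on `E` near `0`, and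
`t ↦ f(t e₁)` has an isolated local minimum at `t = 0`, then for some `ε > 0` the origin is
the unique minimizer of `f` subject to `g_r(x) ≥ 0` and `‖x‖ ≤ ε`. -/
theorem sliced_nlp_local_min (n : ℕ) (hn : 0 < n) (ι : Type) [Fintype ι]
    (f : EuclideanSpace ℝ (Fin n) → ℝ) (g : ι → EuclideanSpace ℝ (Fin n) → ℝ)
    (hf : ContDiff ℝ 1 f) (hg : ∀ r, ContDiff ℝ 1 (g r))
    (hf0 : f 0 = 0) (hg0 : ∀ r, g r 0 = 0)
    (e₁ : EuclideanSpace ℝ (Fin n)) (he₁ : e₁ = EuclideanSpace.single ⟨0, hn⟩ 1)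
    (hLP : {x : EuclideanSpace ℝ (Fin n) |
        (∀ r, (0 : ℝ) ≤ inner ℝ (gradient (g r) 0) x) ∧
        ∀ y : EuclideanSpace ℝ (Fin n), (∀ r, (0 : ℝ) ≤ inner ℝ (gradient (g r) 0) y) →
          (inner ℝ (gradient f 0) x : ℝ) ≤ inner ℝ (gradient f 0) y}
      = {x : EuclideanSpace ℝ (Fin n) | ∃ t : ℝ, x = t • e₁})
    (hzero : ∃ δ > (0 : ℝ), ∀ t : ℝ, |t| < δ → ∀ r, g r (t • e₁) = 0)
    (hmin : ∃ δ > (0 : ℝ), ∀ t : ℝ, |t| < δ → t ≠ 0 → f 0 < f (t • e₁)) :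
    ∃ ε > (0 : ℝ), ∀ x : EuclideanSpace ℝ (Fin n),
      (∀ r, 0 ≤ g r x) → ‖x‖ ≤ ε → x ≠ 0 → f 0 < f x :=
  sliced_nlp_local_min_general n hn ι f g hf hg e₁ he₁ hLP hzero hmin
end

section
/- In the regular pentagon K = conv{k_i : i = 0,…,4} with k_i = Rot_{2πi/5}(1,0), the segment from p₁ = k₀ to p₄ = ½(k₂ + k₃) is an affine diameter of K: no chord of K parallel to it is longer. -/
/-!
The segment from `k₀` to `½(k₂ + k₃)` lies on the horizontal symmetry axis of `K`, and `K` lies in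
the vertical slab `-cos (π / 5) ≤ x ≤ 1` between the edge `k₂k₃` and the vertex `k₀`. The width of
this slab is the length of the segment, so no horizontal chord of `K` can be longer.
-/

open Real

/-- The vertices of the regular pentagon: `k i = Rot_{2πi/5}(1, 0)`. -/
noncomputable def pentVtx (i : ℕ) : EuclideanSpace ℝ (Fin 2) :=
  (WithLp.equiv 2 (Fin 2 → ℝ)).symm ![Real.cos (2 * π * i / 5), Real.sin (2 * π * i / 5)]

/-- The regular pentagon. -/
noncomputable def pentagon : Set (EuclideanSpace ℝ (Fin 2)) :=
  convexHull ℝ {pentVtx 0, pentVtx 1, pentVtx 2, pentVtx 3, pentVtx 4}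

open Set

theorem norm_sub_le_of_mem_slab_of_parallel {E : Type*} [SeminormedAddCommGroup E]
    [NormedSpace ℝ E] (f : E →ₗ[ℝ] ℝ) {v a b : E} {α t : ℝ} (hv : f v ≠ 0)
    (ha : f a ∈ Icc α (α + |f v|)) (hb : f b ∈ Icc α (α + |f v|)) (hab : b - a = t • v) :
    ‖b - a‖ ≤ ‖v‖ := by
  have hft : |t| * |f v| ≤ 1 * |f v| := by
    rw [← abs_mul, ← smul_eq_mul, ← f.map_smul, ← hab, map_sub, one_mul, abs_sub_le_iff]
    constructor <;> linarith [ha.1, ha.2, hb.1, hb.2]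
  have ht : |t| ≤ 1 := le_of_mul_le_mul_right hft (abs_pos.mpr hv)
  calc ‖b - a‖ = |t| * ‖v‖ := by rw [hab, norm_smul, Real.norm_eq_abs]
    _ ≤ ‖v‖ := mul_le_of_le_one_left (norm_nonneg v) ht

lemma cos_pi_div_five_nonneg : 0 ≤ cos (π / 5) :=
  cos_nonneg_of_mem_Icc ⟨by linarith [pi_pos], by linarith [pi_pos]⟩

lemma pentVtx_fst (i : ℕ) : pentVtx i 0 = cos (2 * π * i / 5) := rfl

lemma pentVtx_zero_fst : pentVtx 0 0 = 1 := by
  rw [pentVtx_fst, Nat.cast_zero, mul_zero, zero_div, cos_zero]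

lemma pentVtx_two_fst : pentVtx 2 0 = -cos (π / 5) := by
  rw [pentVtx_fst, ← cos_pi_sub]
  congr 1
  push_cast
  ring

lemma pentVtx_three_fst : pentVtx 3 0 = -cos (π / 5) := by
  rw [pentVtx_fst, ← cos_add_pi]
  congr 1
  push_cast
  ring

lemma pentVtx_fst_mem_Icc (i : ℕ) (hi : i < 5) : pentVtx i 0 ∈ Icc (-cos (π / 5)) 1 := by
  have hc := cos_pi_div_five_nonneg
  have hc2 : 0 ≤ cos (2 * π / 5) :=
    cos_nonneg_of_mem_Icc ⟨by linarith [pi_pos], by linarith [pi_pos]⟩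
  refine ⟨?_, cos_le_one _⟩
  interval_cases i
  · rw [pentVtx_zero_fst]
    linarith
  · rw [pentVtx_fst, Nat.cast_one, mul_one]
    linarith
  · rw [pentVtx_two_fst]
  · rw [pentVtx_three_fst]
  · rw [pentVtx_fst, show 2 * π * ((4 : ℕ) : ℝ) / 5 = 2 * π - 2 * π / 5 by push_cast; ring,
      cos_two_pi_sub]
    linarith

lemma pentagon_subset_slab :
    pentagon ⊆ EuclideanSpace.projₗ (0 : Fin 2) ⁻¹' Icc (-cos (π / 5)) 1 := by
  refine convexHull_min ?_ ((convex_Icc _ _).linear_preimage _)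
  simp only [insert_subset_iff, singleton_subset_iff, mem_preimage]
  exact ⟨pentVtx_fst_mem_Icc 0 (by norm_num), pentVtx_fst_mem_Icc 1 (by norm_num),
    pentVtx_fst_mem_Icc 2 (by norm_num), pentVtx_fst_mem_Icc 3 (by norm_num),
    pentVtx_fst_mem_Icc 4 (by norm_num)⟩

lemma pentagon_axis_fst :
    ((1 / 2 : ℝ) • (pentVtx 2 + pentVtx 3) - pentVtx 0) 0 = -(cos (π / 5) + 1) := by
  simp only [PiLp.sub_apply, PiLp.smul_apply, PiLp.add_apply, smul_eq_mul, pentVtx_zero_fst,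
    pentVtx_two_fst, pentVtx_three_fst]
  ring

/-- In the regular pentagon, the segment from `p₁ = k₀` to `p₄ = ½(k₂ + k₃)` is an affine
diameter: no chord (segment with endpoints in `K`) parallel to it is longer. -/
theorem pentagon_affine_diameter :
    ∀ a ∈ pentagon, ∀ b ∈ pentagon,
      (∃ t : ℝ, b - a = t • ((1 / 2 : ℝ) • (pentVtx 2 + pentVtx 3) - pentVtx 0)) →
      ‖b - a‖ ≤ ‖(1 / 2 : ℝ) • (pentVtx 2 + pentVtx 3) - pentVtx 0‖ := by
  rintro a ha b hb ⟨t, hab⟩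
  set v := (1 / 2 : ℝ) • (pentVtx 2 + pentVtx 3) - pentVtx 0
  have hc := cos_pi_div_five_nonneg
  have hv : EuclideanSpace.projₗ 0 v = -(cos (π / 5) + 1) := pentagon_axis_fst
  have hwidth : -cos (π / 5) + |EuclideanSpace.projₗ 0 v| = 1 := by
    rw [hv, abs_neg, abs_of_nonneg (by linarith)]
    ring
  refine norm_sub_le_of_mem_slab_of_parallel (EuclideanSpace.projₗ 0)
    (α := -cos (π / 5)) ?_ ?_ ?_ hab
  · rw [hv]
    linarith
  · rw [hwidth]
    exact pentagon_subset_slab ha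
  · rw [hwidth]
    exact pentagon_subset_slab hb
end

section
/- In the regular pentagon K with vertices k_i = Rot_{2πi/5}(1,0), set u = cos(π/5). The quadrilateral with vertices p₂ = ¼k₀ + ¾k₁, p₃ = ((3−2u)/4)k₁ + ((1+2u)/4)k₂, p₅ = ((1+2u)/4)k₃ + ((3−2u)/4)k₄, p₆ = ¾k₄ + ¼k₀ is a parallelogram inscribed in K whose sides p₂p₃ and p₆p₅ are parallel to the segment p₁p₄ (p₁ = k₀, p₄ = ½(k₂+k₃)) and have exactly half its length. -/
/-!
The diagonal `k₀k₃` of the regular pentagon is parallel to the edge `k₁k₂` and longer by the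
factor `1 + 2 cos(2π/5) = 2u` (in general `k_{i+3} - k_i = 2u (k_{i+2} - k_{i+1})`); with the
coefficients of the statement this makes `p₃ - p₂` and `p₅ - p₆` both equal to `½ (p₄ - p₁)`.

The four points lie on edges of `K`. The edge `[k_i, k_{i+1}]` is the face of `K` on which the
linear form `⟪n_i, ·⟫`, `n_i` the unit vector at angle `(2i + 1)π/5`, attains its maximum
`cos (π/5)`, because `⟪n_i, k_j⟫ = cos ((2(i - j) + 1)π/5)`. A nonzero linear form cannot attain
its maximum over a set at an interior point, so the edges lie on the boundary.
-/

open Real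

theorem mem_frontier_of_isMaxOn {E : Type*} [NormedAddCommGroup E] [NormedSpace ℝ E]
    {S : Set E} {f : E →L[ℝ] ℝ} {p : E} (hf : f ≠ 0) (hp : p ∈ S) (hmax : IsMaxOn f S p) :
    p ∈ frontier S := by
  refine ⟨subset_closure hp, fun hint => hf ?_⟩
  simpa using (hmax.isLocalMax (mem_interior_iff_mem_nhds.1 hint)).fderiv_eq_zero

noncomputable def unitVec (θ : ℝ) : EuclideanSpace ℝ (Fin 2) := !₂[cos θ, sin θ]

theorem pentVtx_eq_unitVec (i : ℕ) : pentVtx i = unitVec (2 * π * i / 5) := rfl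

theorem inner_unitVec (a b : ℝ) : inner ℝ (unitVec a) (unitVec b) = cos (a - b) := by
  simp only [unitVec, PiLp.inner_apply, RCLike.inner_apply, ringHom_apply, Fin.sum_univ_two,
    Fin.isValue, Matrix.cons_val_zero, Matrix.cons_val_one, Matrix.cons_val_fin_one, cos_sub]
  ring

theorem unitVec_add_int_mul_two_pi (θ : ℝ) (n : ℤ) : unitVec (θ + n * (2 * π)) = unitVec θ := by
  simp only [unitVec, cos_add_int_mul_two_pi, sin_add_int_mul_two_pi]

theorem unitVec_add_three_mul_sub (a t : ℝ) :
    unitVec (a + 3 * t) - unitVec a =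
      (1 + 2 * cos t) • (unitVec (a + 2 * t) - unitVec (a + t)) := by
  have h := sin_sq_add_cos_sq t
  ext i
  fin_cases i
  · simp only [unitVec, cos_add, cos_three_mul, sin_three_mul, sin_add, Fin.zero_eta, Fin.isValue,
      PiLp.sub_apply, Matrix.cons_val_zero, cos_two_mul, sin_two_mul, PiLp.smul_apply, smul_eq_mul]
    linear_combination 4 * sin a * sin t * h
  · simp only [unitVec, cos_add, cos_three_mul, sin_three_mul, sin_add, Fin.mk_one, Fin.isValue,
      PiLp.sub_apply, Matrix.cons_val_one, Matrix.cons_val_fin_one, cos_two_mul, sin_two_mul,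
      PiLp.smul_apply, smul_eq_mul]
    linear_combination -4 * cos a * sin t * h

theorem pentVtx_mod_five (i : ℕ) : pentVtx (i % 5) = pentVtx i := by
  rw [pentVtx_eq_unitVec, pentVtx_eq_unitVec, ← unitVec_add_int_mul_two_pi _ (i / 5 : ℕ),
    Int.cast_natCast]
  congr 1
  conv_rhs => rw [← Nat.mod_add_div i 5]
  push_cast
  ring

theorem pentVtx_mem_pentagon (i : ℕ) : pentVtx i ∈ pentagon := by
  rw [← pentVtx_mod_five]
  apply subset_convexHull ℝ
  have : i % 5 < 5 := Nat.mod_lt _ (by norm_num)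
  interval_cases i % 5 <;> simp

theorem one_add_two_mul_cos_two_pi_div_five : 1 + 2 * cos (2 * π / 5) = 2 * cos (π / 5) := by
  rw [show 2 * π / 5 = 2 * (π / 5) by ring, cos_two_mul]
  linear_combination quadratic_root_cos_pi_div_five

theorem pentVtx_add_three_sub (i : ℕ) :
    pentVtx (i + 3) - pentVtx i = (2 * cos (π / 5)) • (pentVtx (i + 2) - pentVtx (i + 1)) := by
  have h := unitVec_add_three_mul_sub (2 * π * i / 5) (2 * π / 5)
  rw [one_add_two_mul_cos_two_pi_div_five] at h
  simp only [pentVtx_eq_unitVec]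
  push_cast
  convert h using 4 <;> ring

theorem cos_odd_mul_pi_div_five_le (m : ℤ) : cos ((2 * m + 1) * π / 5) ≤ cos (π / 5) := by
  obtain ⟨q, r, hr₁, hr₂, rfl⟩ : ∃ q r : ℤ, -2 ≤ r ∧ r ≤ 2 ∧ m = r + 5 * q :=
    ⟨(m + 2) / 5, (m + 2) % 5 - 2, by omega, by omega, by omega⟩
  have hx : (2 * ((r + 5 * q : ℤ) : ℝ) + 1) * π / 5 = (2 * r + 1) * π / 5 + q * (2 * π) := by
    push_cast; ring
  have hr : (1 : ℤ) ≤ |2 * r + 1| ∧ |2 * r + 1| ≤ 5 := by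
    constructor <;> rcases abs_cases (2 * r + 1) with ⟨h, _⟩ | ⟨h, _⟩ <;> omega
  have hr' : (1 : ℝ) ≤ |2 * (r : ℝ) + 1| ∧ |2 * (r : ℝ) + 1| ≤ 5 := by exact_mod_cast hr
  rw [hx, cos_add_int_mul_two_pi, ← cos_abs, abs_div, abs_mul, abs_of_pos pi_pos,
    abs_of_pos (by norm_num : (0:ℝ) < 5)]
  apply cos_le_cos_of_nonneg_of_le_pi (by positivity) <;> nlinarith [pi_pos, hr'.1, hr'.2]

/-- The outer unit normal of the edge `[k_i, k_{i+1}]`. -/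
noncomputable def pentNormal (i : ℕ) : EuclideanSpace ℝ (Fin 2) := unitVec ((2 * i + 1) * π / 5)

theorem inner_pentNormal_pentVtx (i j : ℕ) :
    inner ℝ (pentNormal i) (pentVtx j) = cos ((2 * ((i - j : ℤ) : ℝ) + 1) * π / 5) := by
  rw [pentNormal, pentVtx_eq_unitVec, inner_unitVec]
  push_cast
  ring_nf

theorem inner_pentNormal_pentVtx_le (i j : ℕ) :
    inner ℝ (pentNormal i) (pentVtx j) ≤ cos (π / 5) :=
  (inner_pentNormal_pentVtx i j).trans_le (cos_odd_mul_pi_div_five_le _)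

theorem inner_pentNormal_pentVtx_self (i : ℕ) :
    inner ℝ (pentNormal i) (pentVtx i) = cos (π / 5) := by
  rw [inner_pentNormal_pentVtx]; simp

theorem inner_pentNormal_pentVtx_succ (i : ℕ) :
    inner ℝ (pentNormal i) (pentVtx (i + 1)) = cos (π / 5) := by
  rw [inner_pentNormal_pentVtx, ← cos_neg]; push_cast; ring_nf

theorem segment_subset_frontier_pentagon (i : ℕ) :
    segment ℝ (pentVtx i) (pentVtx (i + 1)) ⊆ frontier pentagon := by
  intro x hx
  set f := innerSL ℝ (pentNormal i)
  have hf : f ≠ 0 := fun h => by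
    simpa only [f, innerSL_apply_apply, pentNormal, inner_unitVec, sub_self, cos_zero,
      zero_apply, one_ne_zero] using congr($h (pentNormal i))
  have hxK : x ∈ pentagon := (convex_convexHull ℝ _).segment_subset (pentVtx_mem_pentagon i)
    (pentVtx_mem_pentagon _) hx
  have hfx : f x = cos (π / 5) := (convex_hyperplane f.toLinearMap.isLinear _).segment_subset
    (inner_pentNormal_pentVtx_self i) (inner_pentNormal_pentVtx_succ i) hx
  have hK : pentagon ⊆ {y | f y ≤ cos (π / 5)} := convexHull_min
    (by simp only [Set.insert_subset_iff, Set.singleton_subset_iff, Set.mem_ofPred_eq, f,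
      innerSL_apply_apply, inner_pentNormal_pentVtx_le, and_self])
    (convex_halfSpace_le f.toLinearMap.isLinear _)
  exact mem_frontier_of_isMaxOn hf hxK fun y hy => hfx ▸ hK hy

/-- The quadrilateral `p₂p₃p₅p₆` (with `u = cos(π/5)`) is a parallelogram inscribed in the
regular pentagon whose sides `p₂p₃` and `p₆p₅` are parallel to the affine diameter `p₁p₄`
(`p₁ = k₀`, `p₄ = ½(k₂ + k₃)`) and have exactly half its length. -/
theorem pentagon_half_length_parallelogram :
    let u : ℝ := Real.cos (π / 5)
    let p₁ := pentVtx 0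
    let p₄ := (1 / 2 : ℝ) • (pentVtx 2 + pentVtx 3)
    let p₂ := (1 / 4 : ℝ) • pentVtx 0 + (3 / 4 : ℝ) • pentVtx 1
    let p₃ := ((3 - 2 * u) / 4) • pentVtx 1 + ((1 + 2 * u) / 4) • pentVtx 2
    let p₅ := ((1 + 2 * u) / 4) • pentVtx 3 + ((3 - 2 * u) / 4) • pentVtx 4
    let p₆ := (3 / 4 : ℝ) • pentVtx 4 + (1 / 4 : ℝ) • pentVtx 0
    (p₃ - p₂ = p₅ - p₆) ∧
      (∃ t : ℝ, p₃ - p₂ = t • (p₄ - p₁)) ∧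
      ‖p₃ - p₂‖ = ‖p₄ - p₁‖ / 2 ∧ ‖p₅ - p₆‖ = ‖p₄ - p₁‖ / 2 ∧
      p₂ ∈ frontier pentagon ∧ p₃ ∈ frontier pentagon ∧
      p₅ ∈ frontier pentagon ∧ p₆ ∈ frontier pentagon := by
  intro u p₁ p₄ p₂ p₃ p₅ p₆
  have hu₀ : 0 ≤ u := by rw [show u = _ from cos_pi_div_five]; positivity
  have hu₁ : u ≤ 1 := cos_le_one _
  have hk₅ : pentVtx 5 = pentVtx 0 := (pentVtx_mod_five 5).symm
  have h₃₂ : p₃ - p₂ = (1 / 2 : ℝ) • (p₄ - p₁) := by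
    linear_combination (norm := module) (-(1 / 4) : ℝ) • pentVtx_add_three_sub 0
  have h₅₆ : p₅ - p₆ = (1 / 2 : ℝ) • (p₄ - p₁) := by
    have h := pentVtx_add_three_sub 2
    rw [hk₅] at h
    linear_combination (norm := module) (1 / 4 : ℝ) • h
  have half_norm : ‖(1 / 2 : ℝ) • (p₄ - p₁)‖ = ‖p₄ - p₁‖ / 2 := by
    rw [norm_smul]; norm_num; ring
  refine ⟨h₃₂.trans h₅₆.symm, ⟨1 / 2, h₃₂⟩, h₃₂ ▸ half_norm, h₅₆ ▸ half_norm,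
    segment_subset_frontier_pentagon 0 ⟨1 / 4, 3 / 4, by norm_num, by norm_num, by norm_num, rfl⟩,
    segment_subset_frontier_pentagon 1 ⟨(3 - 2 * u) / 4, (1 + 2 * u) / 4, by linarith, by linarith,
      by ring, rfl⟩,
    segment_subset_frontier_pentagon 3 ⟨(1 + 2 * u) / 4, (3 - 2 * u) / 4, by linarith, by linarith,
      by ring, rfl⟩,
    segment_subset_frontier_pentagon 4 ⟨3 / 4, 1 / 4, by norm_num, by norm_num, by norm_num,
      by rw [hk₅]⟩⟩
end

section
/- The system of linear velocity equations c₁v₁ − c₄v₄ = 2c₂v₂ − 2c₃v₃ = 2c₆v₆ − 2c₅v₅ with c₁ = 0, where v_i = (cos φ_i, sin φ_i) and sin(φ₃−φ₂), sin(φ₆−φ₅), sin(φ₄−φ₂), sin(φ₄−φ₃), sin(φ₅−φ₄), sin(φ₆−φ₄) are arbitrary reals, is solved (up to a common scalar factor) by c₂ = sin(φ₄−φ₃)sin(φ₆−φ₅), c₃ = sin(φ₄−φ₂)sin(φ₆−φ₅), c₄ = 2sin(φ₃−φ₂)sin(φ₆−φ₅), c₅ = sin(φ₃−φ₂)sin(φ₆−φ₄),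 c₆ = sin(φ₃−φ₂)sin(φ₅−φ₄). -/
open Real

/-- The velocity equations `c₁v₁ − c₄v₄ = 2c₂v₂ − 2c₃v₃ = 2c₆v₆ − 2c₅v₅` for the evolution
of half-length parallelograms, with `c₁ = 0` and `v_i = (cos φ_i, sin φ_i)`, are solved by
`c₂ = sin(φ₄−φ₃)sin(φ₆−φ₅)`, `c₃ = sin(φ₄−φ₂)sin(φ₆−φ₅)`, `c₄ = 2sin(φ₃−φ₂)sin(φ₆−φ₅)`,
`c₅ = sin(φ₃−φ₂)sin(φ₆−φ₄)`, `c₆ = sin(φ₃−φ₂)sin(φ₅−φ₄)`. -/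
theorem velocity_equations_solution (φ₁ φ₂ φ₃ φ₄ φ₅ φ₆ : ℝ) :
    let v : ℝ → Fin 2 → ℝ := fun θ => ![Real.cos θ, Real.sin θ]
    let c₂ := Real.sin (φ₄ - φ₃) * Real.sin (φ₆ - φ₅)
    let c₃ := Real.sin (φ₄ - φ₂) * Real.sin (φ₆ - φ₅)
    let c₄ := 2 * Real.sin (φ₃ - φ₂) * Real.sin (φ₆ - φ₅)
    let c₅ := Real.sin (φ₃ - φ₂) * Real.sin (φ₆ - φ₄)
    let c₆ := Real.sin (φ₃ - φ₂) * Real.sin (φ₅ - φ₄)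
    ((0 : ℝ) • v φ₁ - c₄ • v φ₄ = (2 * c₂) • v φ₂ - (2 * c₃) • v φ₃) ∧
      ((2 * c₂) • v φ₂ - (2 * c₃) • v φ₃ = (2 * c₆) • v φ₆ - (2 * c₅) • v φ₅) := by
  intro v c₂ c₃ c₄ c₅ c₆
  constructor <;>
  · funext i
    fin_cases i <;>
      simp [v, c₂, c₃, c₄, c₅, c₆, Real.sin_sub, Real.cos_sub] <;> ring
end
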